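/- Let μ ∈ ℂ with Re(μ) > 0. Then for every x ∈ ℂ, F(μ;q,x) = [(q^μ;q)_∞ / ((1−q)·(q;q)_∞)] · ∫_0^1 (qt;q)_∞·e^{−tx}·t^{μ−1} d_q t, where the Jackson q-integral unfolds as ∫_0^1 (qt;q)_∞·e^{−tx}·t^{μ−1} d_q t = (1−q)·Σ_{n=0}^∞ (q^{n+1};q)_∞·e^{−q^n x}·q^{nμ}, an absolutely convergent series. -/

import Mathlib

/-- `(a;c)_n = ∏_{j=0}^{n-1} (1 - a c^j)`. -/
noncomputable def qPoch (a c : ℂ) (n : ℕ) : ℂ := ∏ j ∈ Finset.range n, (1 - a * c ^ j)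

/-- `(a;c)_∞ = ∏_{j=0}^{∞} (1 - a c^j)`. -/
noncomputable def qPochInf (a c : ℂ) : ℂ := ∏' j : ℕ, (1 - a * c ^ j)

/-- `q^μ := exp (μ log q)` for real `q > 0` and complex `μ`. -/
noncomputable def qpow (q : ℝ) (μ : ℂ) : ℂ := Complex.exp (μ * Real.log q)

/-- `F(μ;q,x) = Σ_{n≥0} ((q^μ;q)_n / n!) (-x)^n`. -/
noncomputable def F (μ : ℂ) (q : ℝ) (x : ℂ) : ℂ :=
  ∑' n : ℕ, qPoch (qpow q μ) (q : ℂ) n / (Nat.factorial n : ℂ) * (-x) ^ n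

/-- `(a)_n = a (a+1) ⋯ (a+n-1)`. -/
noncomputable def poch (a : ℂ) (n : ℕ) : ℂ := ∏ j ∈ Finset.range n, (a + (j : ℂ))

/-- `G(a;q,x) = Σ_{n≥0} ((a)_n q^{n(n+1)/2} / (q;q)_n) (-x)^n`. -/
noncomputable def G (a : ℂ) (q : ℝ) (x : ℂ) : ℂ :=
  ∑' n : ℕ, poch a n * (q : ℂ) ^ (n * (n + 1) / 2) / qPoch (q : ℂ) (q : ℂ) n * (-x) ^ n

/-!
Write `a = q^μ`, so `‖a‖ < 1`, and `e_q(z) = ∑ zⁿ / (q;q)ₙ` for Euler's `q`-exponential. Since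
`(qⁿ⁺¹;q)_∞ = (q;q)_∞ / (q;q)ₙ`, the claim is `F(μ;q,x) = (a;q)_∞ ∑ₙ e^{-qⁿx} aⁿ / (q;q)ₙ`.
Expanding `e^{-qⁿx}` and exchanging the two sums (absolutely convergent, as `1/(q;q)ₙ` is bounded
because `(q;q)ₙ → (q;q)_∞ ≠ 0`), the coefficient of `(-x)ᵏ/k!` becomes `(a;q)_∞ e_q(a qᵏ)`.
Euler's identity `e_q(z) (z;q)_∞ = 1`, obtained by iterating `(1 - z) e_q(z) = e_q(qz)` and
letting `e_q(qᴺz) → e_q(0) = 1`, turns it into `(a;q)_∞ / (aqᵏ;q)_∞ = (a;q)ₖ`.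
-/

open Filter Topology

lemma qPoch_zero (a q : ℂ) : qPoch a q 0 = 1 := Finset.prod_range_zero _

lemma qPoch_succ (a q : ℂ) (n : ℕ) : qPoch a q (n + 1) = qPoch a q n * (1 - a * q ^ n) :=
  Finset.prod_range_succ _ _

section QPochhammer

variable {q : ℂ}

lemma multipliable_one_sub_mul_pow (a : ℂ) (hq : ‖q‖ < 1) :
    Multipliable fun j : ℕ => 1 - a * q ^ j := by
  simpa only [sub_eq_add_neg] using multipliable_one_add_of_summable
    (by simpa [norm_mul, norm_pow] using
      (summable_geometric_of_lt_one (norm_nonneg q) hq).mul_left ‖a‖)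

lemma tendsto_qPoch_qPochInf (a : ℂ) (hq : ‖q‖ < 1) :
    Tendsto (qPoch a q) atTop (𝓝 (qPochInf a q)) :=
  (multipliable_one_sub_mul_pow a hq).hasProd.tendsto_prod_nat

lemma qPochInf_eq_qPoch_mul_qPochInf (a : ℂ) (hq : ‖q‖ < 1) (k : ℕ) :
    qPochInf a q = qPoch a q k * qPochInf (a * q ^ k) q := by
  have hshift : (fun j => 1 - a * q ^ (j + k)) = fun j => 1 - a * q ^ k * q ^ j := by
    funext j; ring
  have h := Multipliable.prod_mul_tprod_nat_mul' (f := fun j => 1 - a * q ^ j) (k := k)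
    (hshift ▸ multipliable_one_sub_mul_pow (a * q ^ k) hq)
  rw [hshift] at h
  rw [qPochInf, ← h, qPoch, qPochInf]

lemma one_sub_self_mul_pow_ne_zero (hq : ‖q‖ < 1) (n : ℕ) : 1 - q * q ^ n ≠ 0 := by
  rw [sub_ne_zero, ← pow_succ', ne_comm]
  exact ne_of_apply_ne norm (by simpa using (pow_lt_one₀ (norm_nonneg q) hq n.succ_ne_zero).ne)

lemma qPoch_self_ne_zero (hq : ‖q‖ < 1) (n : ℕ) : qPoch q q n ≠ 0 :=
  Finset.prod_ne_zero_iff.mpr fun j _ => one_sub_self_mul_pow_ne_zero hq j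

lemma qPochInf_self_ne_zero (hq : ‖q‖ < 1) : qPochInf q q ≠ 0 := by
  simpa only [qPochInf, sub_eq_add_neg] using
    tprod_one_add_ne_zero_of_summable (f := fun j => -(q * q ^ j))
    (by simpa only [← sub_eq_add_neg] using one_sub_self_mul_pow_ne_zero hq)
    (by simpa [norm_mul, norm_pow] using
      (summable_geometric_of_lt_one (norm_nonneg q) hq).mul_left ‖q‖)

lemma exists_norm_inv_qPoch_self_le (hq : ‖q‖ < 1) : ∃ C, ∀ n, ‖(qPoch q q n)⁻¹‖ ≤ C := by
  obtain ⟨C, hC⟩ := isBounded_iff_forall_norm_le.mp <| Metric.isBounded_range_of_tendsto _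
    ((tendsto_qPoch_qPochInf q hq).inv₀ (qPochInf_self_ne_zero hq))
  exact ⟨C, fun n => hC _ ⟨n, rfl⟩⟩

lemma norm_pow_mul_le_norm (hq : ‖q‖ ≤ 1) (N : ℕ) (z : ℂ) : ‖q ^ N * z‖ ≤ ‖z‖ := by
  rw [norm_mul, norm_pow]
  exact mul_le_of_le_one_left (norm_nonneg z) (pow_le_one₀ (norm_nonneg q) hq)

lemma qPochInf_pow_succ (hq : ‖q‖ < 1) (n : ℕ) :
    qPochInf (q ^ (n + 1)) q = qPochInf q q / qPoch q q n := by
  rw [eq_div_iff (qPoch_self_ne_zero hq n), qPochInf_eq_qPoch_mul_qPochInf q hq n, pow_succ',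
    mul_comm]

noncomputable def qExp (q z : ℂ) : ℂ := ∑' n : ℕ, z ^ n / qPoch q q n

lemma summable_pow_div_qPoch (hq : ‖q‖ < 1) {z : ℂ} (hz : ‖z‖ < 1) :
    Summable fun n : ℕ => z ^ n / qPoch q q n := by
  obtain ⟨C, hC⟩ := exists_norm_inv_qPoch_self_le hq
  refine .of_norm_bounded ((summable_geometric_of_lt_one (norm_nonneg z) hz).mul_right C)
    fun n => ?_
  rw [div_eq_mul_inv, norm_mul, norm_pow]
  exact mul_le_mul_of_nonneg_left (hC n) (by positivity)

lemma one_sub_mul_qExp (hq : ‖q‖ < 1) {z : ℂ} (hz : ‖z‖ < 1) :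
    (1 - z) * qExp q z = qExp q (q * z) := by
  have hs : HasSum (fun n => z ^ n / qPoch q q n) (qExp q z) :=
    (summable_pow_div_qPoch hq hz).hasSum
  -- `(1 - qⁿ⁺¹) / (q;q)ₙ₊₁ = 1 / (q;q)ₙ`, and the `n = 0` term of the left side vanishes
  have hshift : HasSum (fun n => (1 - q ^ n) * (z ^ n / qPoch q q n)) (z * qExp q z) := by
    rw [← hasSum_nat_add_iff' 1]
    simp only [Finset.sum_range_one, pow_zero, sub_self, zero_mul, sub_zero]
    refine (hs.mul_left z).congr_fun fun n => ?_
    have := one_sub_self_mul_pow_ne_zero hq n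
    have := qPoch_self_ne_zero hq n
    rw [qPoch_succ, pow_succ', pow_succ']
    field_simp
  have hqz : HasSum (fun n => (q * z) ^ n / qPoch q q n) (qExp q z - z * qExp q z) := by
    refine (hs.sub hshift).congr_fun fun n => ?_
    ring
  rw [show qExp q (q * z) = _ from hqz.tsum_eq]
  ring

lemma qExp_mul_qPoch (hq : ‖q‖ < 1) {z : ℂ} (hz : ‖z‖ < 1) (N : ℕ) :
    qExp q z * qPoch z q N = qExp q (q ^ N * z) := by
  induction N with
  | zero => simp [qPoch_zero]
  | succ N ih =>
    rw [qPoch_succ, ← mul_assoc, ih, pow_succ', mul_assoc,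
      ← one_sub_mul_qExp hq ((norm_pow_mul_le_norm hq.le N z).trans_lt hz)]
    ring

lemma tendsto_qExp_pow_mul (hq : ‖q‖ < 1) {z : ℂ} (hz : ‖z‖ < 1) :
    Tendsto (fun N : ℕ => qExp q (q ^ N * z)) atTop (𝓝 1) := by
  obtain ⟨C, hC⟩ := exists_norm_inv_qPoch_self_le hq
  have hzero : ∑' n : ℕ, (0 : ℂ) ^ n / qPoch q q n = 1 := by
    rw [tsum_eq_single 0 fun n hn => by simp [hn]]
    simp [qPoch_zero]
  rw [← hzero]
  refine tendsto_tsum_of_dominated_convergence (bound := fun n => ‖z‖ ^ n * C)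
    ((summable_geometric_of_lt_one (norm_nonneg z) hz).mul_right C) (fun n => ?_)
    (.of_forall fun N n => ?_)
  · have h : Tendsto (fun N : ℕ => q ^ N * z) atTop (𝓝 0) := by
      simpa using (tendsto_pow_atTop_nhds_zero_of_norm_lt_one hq).mul_const z
    exact (h.pow n).div_const _
  · rw [div_eq_mul_inv, norm_mul, norm_pow]
    exact mul_le_mul (pow_le_pow_left₀ (norm_nonneg _) (norm_pow_mul_le_norm hq.le N z) n)
      (hC n) (norm_nonneg _) (by positivity)

theorem qExp_mul_qPochInf (hq : ‖q‖ < 1) {z : ℂ} (hz : ‖z‖ < 1) :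
    qExp q z * qPochInf z q = 1 :=
  tendsto_nhds_unique ((tendsto_qPoch_qPochInf z hq).const_mul _)
    (by simpa only [qExp_mul_qPoch hq hz] using tendsto_qExp_pow_mul hq hz)

lemma qPochInf_mul_qExp_mul_pow (hq : ‖q‖ < 1) {a : ℂ} (ha : ‖a‖ < 1) (k : ℕ) :
    qPochInf a q * qExp q (a * q ^ k) = qPoch a q k := by
  have hak : ‖a * q ^ k‖ < 1 := by
    rw [mul_comm]; exact (norm_pow_mul_le_norm hq.le k a).trans_lt ha
  rw [qPochInf_eq_qPoch_mul_qPochInf a hq k, mul_assoc, mul_comm (qPochInf _ q),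
    qExp_mul_qPochInf hq hak, mul_one]

lemma summable_norm_exp_mul_pow_div_qPoch (hq : ‖q‖ < 1) {a : ℂ} (ha : ‖a‖ < 1) (x : ℂ) :
    Summable fun n : ℕ => ‖Complex.exp (-(q ^ n * x)) * a ^ n / qPoch q q n‖ := by
  obtain ⟨C, hC⟩ := exists_norm_inv_qPoch_self_le hq
  refine .of_nonneg_of_le (fun n => norm_nonneg _) (fun n => ?_)
    ((summable_geometric_of_lt_one (norm_nonneg a) ha).mul_left (Real.exp ‖x‖ * C))
  have hexp : ‖Complex.exp (-(q ^ n * x))‖ ≤ Real.exp ‖x‖ :=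
    (Complex.norm_exp_le_exp_norm _).trans
      (Real.exp_le_exp.mpr (by simpa using norm_pow_mul_le_norm hq.le n x))
  rw [div_eq_mul_inv, norm_mul, norm_mul, norm_pow]
  calc ‖Complex.exp (-(q ^ n * x))‖ * ‖a‖ ^ n * ‖(qPoch q q n)⁻¹‖
      ≤ Real.exp ‖x‖ * ‖a‖ ^ n * C := by gcongr; exact hC n
    _ = _ := by ring

theorem qPochInf_mul_tsum_exp_mul_pow_div_qPoch (hq : ‖q‖ < 1) {a : ℂ} (ha : ‖a‖ < 1) (x : ℂ) :
    qPochInf a q * ∑' n : ℕ, Complex.exp (-(q ^ n * x)) * a ^ n / qPoch q q n =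
      ∑' k : ℕ, qPoch a q k / (k.factorial : ℂ) * (-x) ^ k := by
  set g : ℕ → ℕ → ℂ := fun n k => (a * q ^ k) ^ n / qPoch q q n * ((-x) ^ k / k.factorial)
  obtain ⟨C, hC⟩ := exists_norm_inv_qPoch_self_le hq
  have hC0 : 0 ≤ C := (norm_nonneg _).trans (hC 0)
  have hg : Summable (Function.uncurry g) := by
    refine .of_norm_bounded
      (((summable_geometric_of_lt_one (norm_nonneg a) ha).mul_right C).mul_of_nonneg
        (Real.summable_pow_div_factorial ‖x‖) (fun n => by positivity) (fun k => by positivity))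
      fun ⟨n, k⟩ => ?_
    simp only [Function.uncurry_apply_pair, g, div_eq_mul_inv, norm_mul, norm_pow, norm_neg,
      norm_inv, Complex.norm_natCast]
    gcongr ?_ ^ n * ?_ * _
    · exact mul_le_of_le_one_right (norm_nonneg a) (pow_le_one₀ (norm_nonneg q) hq.le)
    · exact norm_inv (qPoch q q n) ▸ hC n
  have hrow (n : ℕ) : ∑' k, g n k = Complex.exp (-(q ^ n * x)) * a ^ n / qPoch q q n := by
    have hexp : Complex.exp (-(q ^ n * x)) = ∑' k : ℕ, (-(q ^ n * x)) ^ k / k.factorial := by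
      rw [Complex.exp_eq_exp_ℂ, NormedSpace.exp_eq_tsum_div]
    calc ∑' k, g n k = ∑' k : ℕ, a ^ n / qPoch q q n * ((-(q ^ n * x)) ^ k / k.factorial) :=
          tsum_congr fun k => by ring
      _ = _ := by rw [tsum_mul_left, hexp]; ring
  have hcol (k : ℕ) : ∑' n, g n k = qExp q (a * q ^ k) * ((-x) ^ k / k.factorial) :=
    tsum_mul_right
  simp_rw [← hrow]
  rw [← hg.tsum_comm, ← tsum_mul_left]
  refine tsum_congr fun k => ?_
  rw [hcol, ← mul_assoc, qPochInf_mul_qExp_mul_pow hq ha]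
  ring

end QPochhammer

lemma norm_qpow_lt_one {q : ℝ} (hq0 : 0 < q) (hq1 : q < 1) {μ : ℂ} (hμ : 0 < μ.re) :
    ‖qpow q μ‖ < 1 := by
  rw [qpow, Complex.norm_exp, Real.exp_lt_one_iff, Complex.re_mul_ofReal]
  exact mul_neg_of_pos_of_neg hμ (Real.log_neg hq0 hq1)

/-- Jackson `q`-integral representation
`F(μ;q,x) = ((q^μ;q)_∞ / ((1-q)(q;q)_∞)) ∫_0^1 (qt;q)_∞ e^{-tx} t^{μ-1} d_q t` for `Re μ > 0`,
where the `q`-integral unfolds as `(1-q) Σ_{n≥0} (q^{n+1};q)_∞ e^{-q^n x} q^{nμ}`. -/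
theorem stmt10 (q : ℝ) (hq0 : 0 < q) (hq1 : q < 1)
    (μ : ℂ) (hμ : 0 < μ.re) (x : ℂ) :
    Summable (fun n : ℕ =>
      ‖qPochInf ((q : ℂ) ^ (n + 1)) (q : ℂ) *
        Complex.exp (-((q : ℂ) ^ n * x)) * qpow q μ ^ n‖) ∧
    F μ q x =
      qPochInf (qpow q μ) (q : ℂ) / ((1 - (q : ℂ)) * qPochInf (q : ℂ) (q : ℂ)) *
        ((1 - (q : ℂ)) *
          ∑' n : ℕ, qPochInf ((q : ℂ) ^ (n + 1)) (q : ℂ) *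
            Complex.exp (-((q : ℂ) ^ n * x)) * qpow q μ ^ n) := by
  have hq : ‖(q : ℂ)‖ < 1 := by rwa [Complex.norm_real, Real.norm_of_nonneg hq0.le]
  have ha := norm_qpow_lt_one hq0 hq1 hμ
  have hsummand (n : ℕ) : qPochInf ((q : ℂ) ^ (n + 1)) q *
        Complex.exp (-((q : ℂ) ^ n * x)) * qpow q μ ^ n =
      qPochInf q q * (Complex.exp (-((q : ℂ) ^ n * x)) * qpow q μ ^ n / qPoch q q n) := by
    rw [qPochInf_pow_succ hq]
    ring
  refine ⟨?_, ?_⟩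
  · simpa only [hsummand, norm_mul] using
      (summable_norm_exp_mul_pow_div_qPoch hq ha x).mul_left ‖qPochInf (q : ℂ) q‖
  · rw [tsum_congr hsummand, tsum_mul_left, F, ← qPochInf_mul_tsum_exp_mul_pow_div_qPoch hq ha x]
    have h1q : (1 : ℂ) - q ≠ 0 := sub_ne_zero.mpr (by exact_mod_cast hq1.ne')
    have hinf := qPochInf_self_ne_zero hq
    generalize ∑' n : ℕ, Complex.exp (-((q : ℂ) ^ n * x)) * qpow q μ ^ n / qPoch q q n = T
    field_simp
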